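/- Let ℓ and r be positive integers, let f_1, …, f_k ∈ [0,1), let z ∈ ℝ, and set f(t) = Σ_{j=1}^k e^{2πi f_j t}. Let c'_t = ∫_0^1 K_ℓ(x)^r e^{−2πi t x} dx for integers t (the Fourier coefficients of K_ℓ^r, which vanish for |t| > rℓ). Then Σ_{t=−rℓ}^{rℓ} c'_t | f(t) − e^{2πi t z} |² = 1 + Σ_{j=1}^k Σ_{j'=1}^k K_ℓ(f_j − f_{j'})^r − 2 Σ_{j=1}^k K_ℓ(z − f_j)^r. -/

import Mathlib

/-!
`K_ℓ^r` is a trigonometric polynomial of degree `rℓ`, so it equals its Fourier series truncated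
at `rℓ`. Expanding `|∑ᵢ wᵢ e(t aᵢ)|² = ∑_{i,i'} wᵢ wᵢ' e(t (aᵢ - aᵢ'))` and summing against the
coefficients `c'_t` therefore gives `∑_{i,i'} wᵢ wᵢ' K_ℓ(aᵢ - aᵢ')^r`. Take the points `f_j` with
weight `1` and `z` with weight `-1`, and use `K_ℓ(0) = 1` and the evenness of `K_ℓ`.
-/

open Complex Finset

/-- The normalized Fejér kernel of order `ℓ`:
`K_ℓ(x) = (1/ℓ²) |Σ_{j=0}^{ℓ-1} e^{2πijx}|²`. -/
noncomputable def fejer (ℓ : ℕ) (x : ℝ) : ℝ :=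
  (1 / (ℓ : ℝ) ^ 2) *
    ‖∑ j ∈ Finset.range ℓ,
      Complex.exp (2 * Real.pi * Complex.I * (j : ℂ) * (x : ℂ))‖ ^ 2

noncomputable def fourierMode (t : ℤ) (x : ℝ) : ℂ :=
  exp (2 * Real.pi * I * t * x)

lemma fourierMode_add (s u : ℤ) (x : ℝ) :
    fourierMode (s + u) x = fourierMode s x * fourierMode u x := by
  rw [fourierMode, fourierMode, fourierMode, ← exp_add]
  push_cast
  ring_nf

lemma fourierMode_zero_left (x : ℝ) : fourierMode 0 x = 1 := by
  simp [fourierMode]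

lemma conj_fourierMode (t : ℤ) (x : ℝ) :
    (starRingEnd ℂ) (fourierMode t x) = fourierMode (-t) x := by
  rw [fourierMode, fourierMode, ← exp_conj]
  simp only [map_mul, map_ofNat, conj_I, conj_ofReal, map_intCast]
  push_cast
  ring_nf

lemma fourierMode_sub (t : ℤ) (a b : ℝ) :
    fourierMode t (a - b) = fourierMode t a * (starRingEnd ℂ) (fourierMode t b) := by
  rw [conj_fourierMode, fourierMode, fourierMode, fourierMode, ← exp_add]
  push_cast
  ring_nf

lemma exp_mul_intCast_eq_fourierMode (x : ℝ) (t : ℤ) :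
    exp (2 * Real.pi * I * x * t) = fourierMode t x := by
  rw [fourierMode, mul_right_comm]

@[fun_prop]
lemma continuous_fourierMode (t : ℤ) : Continuous (fourierMode t) := by
  unfold fourierMode
  fun_prop

lemma integral_fourierMode (t : ℤ) :
    ∫ x in (0 : ℝ)..1, fourierMode t x = if t = 0 then 1 else 0 := by
  split_ifs with ht
  · simp [fourierMode, ht]
  · have hc : 2 * Real.pi * I * t ≠ 0 := by simp [Real.pi_ne_zero, I_ne_zero, ht]
    have hperiod : exp (2 * Real.pi * I * t * 1) = 1 := by
      rw [mul_one, mul_comm]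
      exact exp_int_mul_two_pi_mul_I t
    simp only [fourierMode, integral_exp_mul_complex hc, ofReal_one, hperiod, ofReal_zero,
      mul_zero, exp_zero, sub_self, zero_div]

def IsTrigPoly (n : ℕ) (T : ℝ → ℂ) : Prop :=
  ∃ (ι : Type) (s : Finset ι) (a : ι → ℂ) (m : ι → ℤ),
    (∀ i ∈ s, |m i| ≤ n) ∧ ∀ x, T x = ∑ i ∈ s, a i * fourierMode (m i) x

namespace IsTrigPoly

lemma one : IsTrigPoly 0 1 :=
  ⟨Unit, univ, fun _ => 1, fun _ => 0, by simp, by simp [fourierMode_zero_left]⟩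

lemma mul {m n : ℕ} {T U : ℝ → ℂ} (hT : IsTrigPoly m T) (hU : IsTrigPoly n U) :
    IsTrigPoly (m + n) (T * U) := by
  obtain ⟨ι, s, a, p, hp, hT⟩ := hT
  obtain ⟨κ, s', b, q, hq, hU⟩ := hU
  refine ⟨ι × κ, s ×ˢ s', fun i => a i.1 * b i.2, fun i => p i.1 + q i.2, ?_, fun x => ?_⟩
  · rintro ⟨i, j⟩ hij
    rw [mem_product] at hij
    push_cast
    exact (abs_add_le _ _).trans (add_le_add (hp i hij.1) (hq j hij.2))
  · rw [Pi.mul_apply, hT, hU, sum_mul_sum, sum_product]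
    refine sum_congr rfl fun i _ => sum_congr rfl fun j _ => ?_
    rw [fourierMode_add]
    ring

lemma pow {n : ℕ} {T : ℝ → ℂ} (hT : IsTrigPoly n T) (r : ℕ) : IsTrigPoly (r * n) (T ^ r) := by
  induction r with
  | zero => simpa using one
  | succ r ih => simpa [pow_succ, add_mul] using ih.mul hT

lemma sum_fourierCoeff_mul_fourierMode {n : ℕ} {T : ℝ → ℂ} (hT : IsTrigPoly n T) (y : ℝ) :
    ∑ t ∈ Icc (-(n : ℤ)) n, (∫ x in (0 : ℝ)..1, T x * fourierMode (-t) x) * fourierMode t y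
      = T y := by
  obtain ⟨ι, s, a, m, hm, hT⟩ := hT
  have hcoeff (t : ℤ) :
      ∫ x in (0 : ℝ)..1, T x * fourierMode (-t) x = ∑ i ∈ s, if m i = t then a i else 0 := by
    simp_rw [hT, sum_mul, mul_assoc, ← fourierMode_add]
    rw [intervalIntegral.integral_finsetSum fun i _ =>
      Continuous.intervalIntegrable (u := fun x => a i * fourierMode (m i + -t) x)
        (by fun_prop) 0 1]
    refine sum_congr rfl fun i _ => ?_
    rw [intervalIntegral.integral_const_mul, integral_fourierMode]
    simp only [add_neg_eq_zero, mul_ite, mul_one, mul_zero]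
  simp_rw [hcoeff, sum_mul, ite_mul, zero_mul, hT y]
  rw [sum_comm]
  refine sum_congr rfl fun i hi => ?_
  rw [sum_ite_eq, if_pos (mem_Icc.2 (abs_le.1 (hm i hi)))]

lemma sum_fourierCoeff_mul_norm_sq {n : ℕ} {T : ℝ → ℂ} (hT : IsTrigPoly n T)
    {ι : Type*} (s : Finset ι) (w a : ι → ℝ) :
    ∑ t ∈ Icc (-(n : ℤ)) n, (∫ x in (0 : ℝ)..1, T x * fourierMode (-t) x) *
        ((‖∑ i ∈ s, (w i : ℂ) * fourierMode t (a i)‖ ^ 2 : ℝ) : ℂ)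
      = ∑ i ∈ s, ∑ i' ∈ s, (w i * w i' : ℂ) * T (a i - a i') := by
  have hnorm (t : ℤ) : ((‖∑ i ∈ s, (w i : ℂ) * fourierMode t (a i)‖ ^ 2 : ℝ) : ℂ)
      = ∑ i ∈ s, ∑ i' ∈ s, (w i * w i' : ℂ) * fourierMode t (a i - a i') := by
    rw [ofReal_pow, ← mul_conj', map_sum, sum_mul_sum]
    refine sum_congr rfl fun i _ => sum_congr rfl fun i' _ => ?_
    rw [map_mul, conj_ofReal, fourierMode_sub]
    ring
  simp_rw [hnorm, mul_sum, ← hT.sum_fourierCoeff_mul_fourierMode (a _ - a _), mul_sum]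
  rw [sum_comm]
  refine sum_congr rfl fun i _ => ?_
  rw [sum_comm]
  exact sum_congr rfl fun i' _ => sum_congr rfl fun t _ => by ring

end IsTrigPoly

lemma ofReal_fejer (ℓ : ℕ) (x : ℝ) :
    (fejer ℓ x : ℂ)
      = ∑ p ∈ range ℓ ×ˢ range ℓ, 1 / (ℓ : ℂ) ^ 2 * fourierMode (p.1 - p.2) x := by
  have hD : ∑ j ∈ range ℓ, exp (2 * Real.pi * I * (j : ℂ) * x)
      = ∑ j ∈ range ℓ, fourierMode j x := by
    simp [fourierMode]
  rw [fejer, ofReal_mul, ofReal_pow, ← mul_conj', hD, map_sum, sum_mul_sum, ← sum_product',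
    mul_sum]
  refine sum_congr rfl fun p _ => ?_
  rw [sub_eq_add_neg, fourierMode_add, conj_fourierMode]
  push_cast
  rfl

lemma isTrigPoly_fejer (ℓ : ℕ) : IsTrigPoly ℓ (fun x => (fejer ℓ x : ℂ)) := by
  refine ⟨ℕ × ℕ, range ℓ ×ˢ range ℓ, _, fun p => p.1 - p.2, fun p hp => ?_, ofReal_fejer ℓ⟩
  rw [mem_product, mem_range, mem_range] at hp
  rw [abs_le]
  dsimp only
  omega

lemma fejer_neg (ℓ : ℕ) (x : ℝ) : fejer ℓ (-x) = fejer ℓ x := by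
  have h (j : ℕ) : exp (2 * Real.pi * I * j * (-x : ℝ))
      = (starRingEnd ℂ) (exp (2 * Real.pi * I * j * x)) := by
    rw [← exp_conj]
    simp only [map_mul, map_ofNat, conj_I, conj_ofReal, map_natCast]
    push_cast
    ring_nf
  simp only [fejer, h, ← map_sum, Complex.norm_conj]

lemma fejer_zero {ℓ : ℕ} (hℓ : 0 < ℓ) : fejer ℓ 0 = 1 := by
  have : (ℓ : ℝ) ≠ 0 := by positivity
  simp only [fejer, ofReal_zero, mul_zero, exp_zero, sum_const, card_range, nsmul_eq_mul,
    mul_one, RCLike.norm_natCast]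
  field_simp

theorem stmt15_general (ℓ r k : ℕ) (hℓ : 0 < ℓ)
    (f : Fin k → ℝ) (z : ℝ)
    (F : ℤ → ℂ)
    (hF : ∀ t : ℤ, F t = ∑ j, Complex.exp (2 * Real.pi * Complex.I * (f j : ℂ) * (t : ℂ)))
    (c' : ℤ → ℂ)
    (hc' : ∀ t : ℤ, c' t = ∫ x in (0:ℝ)..1,
      ((fejer ℓ x : ℂ)) ^ r * Complex.exp (-(2 * Real.pi * Complex.I * (t : ℂ) * (x : ℂ)))) :
    (∑ t ∈ Finset.Icc (-(r * ℓ : ℤ)) (r * ℓ : ℤ),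
        c' t * ((‖F t - Complex.exp (2 * Real.pi * Complex.I * (z : ℂ) * (t : ℂ))‖ ^ 2 : ℝ) : ℂ))
      = ((1 + (∑ j, ∑ j', (fejer ℓ (f j - f j')) ^ r) - 2 * (∑ j, (fejer ℓ (z - f j)) ^ r) : ℝ) : ℂ) := by
  let w : Option (Fin k) → ℝ := fun i => i.elim (-1) fun _ => 1
  let a : Option (Fin k) → ℝ := fun i => i.elim z f
  have hcoeff (t : ℤ) : c' t = ∫ x in (0 : ℝ)..1, (fejer ℓ x : ℂ) ^ r * fourierMode (-t) x := by
    simp only [hc', fourierMode]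
    push_cast
    ring_nf
  have hdiff (t : ℤ) : F t - exp (2 * Real.pi * I * z * t)
      = ∑ i, (w i : ℂ) * fourierMode t (a i) := by
    simp only [hF, exp_mul_intCast_eq_fourierMode, Fintype.sum_option, w, a, Option.elim,
      ofReal_neg, ofReal_one, one_mul]
    ring
  have key := ((isTrigPoly_fejer ℓ).pow r).sum_fourierCoeff_mul_norm_sq univ w a
  simp only [Nat.cast_mul, Pi.pow_apply] at key
  simp_rw [hcoeff, hdiff, key]
  have hsymm (j : Fin k) : fejer ℓ (f j - z) = fejer ℓ (z - f j) := by rw [← fejer_neg, neg_sub]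
  simp only [Fintype.sum_option, sum_add_distrib, w, a, Option.elim_none, Option.elim_some,
    sub_self, fejer_zero hℓ, hsymm]
  push_cast
  simp only [neg_mul, one_mul, mul_one, sum_neg_distrib]
  ring

theorem stmt15 (ℓ r k : ℕ) (hℓ : 0 < ℓ) (hr : 0 < r)
    (f : Fin k → ℝ) (hf : ∀ j, f j ∈ Set.Ico (0 : ℝ) 1) (z : ℝ)
    (F : ℤ → ℂ)
    (hF : ∀ t : ℤ, F t = ∑ j, Complex.exp (2 * Real.pi * Complex.I * (f j : ℂ) * (t : ℂ)))
    (c' : ℤ → ℂ)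
    (hc' : ∀ t : ℤ, c' t = ∫ x in (0:ℝ)..1,
      ((fejer ℓ x : ℂ)) ^ r * Complex.exp (-(2 * Real.pi * Complex.I * (t : ℂ) * (x : ℂ)))) :
    (∑ t ∈ Finset.Icc (-(r * ℓ : ℤ)) (r * ℓ : ℤ),
        c' t * ((‖F t - Complex.exp (2 * Real.pi * Complex.I * (z : ℂ) * (t : ℂ))‖ ^ 2 : ℝ) : ℂ))
      = ((1 + (∑ j, ∑ j', (fejer ℓ (f j - f j')) ^ r) - 2 * (∑ j, (fejer ℓ (z - f j)) ^ r) : ℝ) : ℂ) :=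
  stmt15_general ℓ r k hℓ f z F hF c' hc'
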